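/- Let (G,𝔖) be a hierarchically hyperbolic group with H hierarchically hyperbolically embedded in (G,𝔖), let the pyramid space 𝒫G_r be δ-hyperbolic, and let each hyperbolic cone 𝔠(gH) be Q-quasiconvex in 𝒫G_r. Then there exists C = C(δ,Q) such that, for all sufficiently large r, the following holds for all x, y ∈ 𝒫G_r and all cosets gH: if d_△(x, 𝔠(gH)) ≤ 2δ+Q and d_△(y, 𝔠(gH)) ≤ 2δ+Q and d_△(x,y) ≥ C, then any geodesic from x to y intersects 𝔠(gH) in an interior point of that geodesic. -/

import Mathlib

open Metric Set Classical

noncomputable section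

/-- The distance between two subsets of a pseudometric space:
the infimum of distances between their points. -/
noncomputable def sDist {Y : Type*} [PseudoMetricSpace Y] (A B : Set Y) : ℝ :=
  sInf (Set.image2 dist A B)

/-- The Gromov four-point condition: `Y` is `δ`-hyperbolic. -/
def GromovHyperbolic (Y : Type*) [PseudoMetricSpace Y] (δ : ℝ) : Prop :=
  ∀ x y z w : Y,
    dist x y + dist z w ≤ max (dist x z + dist y w) (dist x w + dist y z) + 2 * δ

/-- `γ` is a unit-speed geodesic from `a` to `b`, parametrized on `[0, dist a b]`. -/
def IsGeodesicFrom {Y : Type*} [PseudoMetricSpace Y] (γ : ℝ → Y) (a b : Y) : Prop :=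
  γ 0 = a ∧ γ (dist a b) = b ∧
    ∀ s ∈ Set.Icc (0 : ℝ) (dist a b), ∀ t ∈ Set.Icc (0 : ℝ) (dist a b),
      dist (γ s) (γ t) = |s - t|

/-- A geodesic metric space: any two points are joined by a geodesic. -/
def GeodesicSpace (Y : Type*) [PseudoMetricSpace Y] : Prop :=
  ∀ a b : Y, ∃ γ : ℝ → Y, IsGeodesicFrom γ a b

/-- A subset `A` is `Q`-quasiconvex: every geodesic between points of `A`
stays in the `Q`-neighborhood of `A`. -/
def QuasiconvexIn {Y : Type*} [PseudoMetricSpace Y] (A : Set Y) (Q : ℝ) : Prop :=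
  ∀ a ∈ A, ∀ b ∈ A, ∀ γ : ℝ → Y, IsGeodesicFrom γ a b →
    ∀ t ∈ Set.Icc (0 : ℝ) (dist a b), Metric.infDist (γ t) A ≤ Q

/-- A uniformly locally-finite discrete geodesic space. -/
structure ULFDG (X : Type*) [PseudoMetricSpace X] : Prop where
  discrete : ∃ r₀ : ℝ, 0 < r₀ ∧ ∀ x y : X, x ≠ y → r₀ ≤ dist x y
  locallyFinite : ∃ p : ℝ → ℝ, ∀ (x : X) (r : ℝ),
    (Metric.closedBall x r).Finite ∧ ((Metric.closedBall x r).ncard : ℝ) ≤ p r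
  discreteGeodesics : ∃ r₁ : ℝ, ∀ x y : X, ∃ (n : ℕ) (γ : Fin (n + 1) → X),
    γ 0 = x ∧ γ (Fin.last n) = y ∧
    dist x y = ∑ i : Fin n, dist (γ i.castSucc) (γ i.succ) ∧
    ∀ i : Fin n, dist (γ i.castSucc) (γ i.succ) ≤ r₁

/-- The asymptotic dimension of `X` is at most `n`: for every `D > 0` there are
`n+1` families of uniformly bounded, `D`-separated sets covering `X`. -/
def ASDimLE (X : Type*) [PseudoMetricSpace X] (n : ℕ) : Prop :=
  ∀ D : ℝ, 0 < D → ∃ B : ℝ, 0 ≤ B ∧ ∃ 𝒰 : Fin (n + 1) → Set (Set X),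
    (∀ x : X, ∃ i, ∃ U ∈ 𝒰 i, x ∈ U) ∧
    (∀ i, ∀ U ∈ 𝒰 i, Metric.diam U ≤ B) ∧
    (∀ i, ∀ U ∈ 𝒰 i, ∀ V ∈ 𝒰 i, U ≠ V → ∀ u ∈ U, ∀ v ∈ V, D < dist u v)

/-- `X` has finite asymptotic dimension. -/
def FiniteASDim (X : Type*) [PseudoMetricSpace X] : Prop := ∃ n : ℕ, ASDimLE X n

/-- A family of metric spaces has asymptotic dimension at most `n` uniformly. -/
def UniformASDimLE {ι : Type*} (Y : ι → Type*) [∀ i, PseudoMetricSpace (Y i)] (n : ℕ) : Prop :=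
  ∀ D : ℝ, 0 < D → ∃ B : ℝ, 0 ≤ B ∧ ∀ i : ι, ∃ 𝒰 : Fin (n + 1) → Set (Set (Y i)),
    (∀ x : Y i, ∃ j, ∃ U ∈ 𝒰 j, x ∈ U) ∧
    (∀ j, ∀ U ∈ 𝒰 j, Metric.diam U ≤ B) ∧
    (∀ j, ∀ U ∈ 𝒰 j, ∀ V ∈ 𝒰 j, U ≠ V → ∀ u ∈ U, ∀ v ∈ V, D < dist u v)

/-- Asymptotic dimension at most `n` with control function `f`: for all
sufficiently large `D`, there are covers as above with bound `B = f D`. -/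
def ASDimLEControl (X : Type*) [PseudoMetricSpace X] (n : ℕ) (f : ℝ → ℝ) : Prop :=
  ∃ D₀ : ℝ, ∀ D : ℝ, D₀ ≤ D → ∃ 𝒰 : Fin (n + 1) → Set (Set X),
    (∀ x : X, ∃ i, ∃ U ∈ 𝒰 i, x ∈ U) ∧
    (∀ i, ∀ U ∈ 𝒰 i, Metric.diam U ≤ f D) ∧
    (∀ i, ∀ U ∈ 𝒰 i, ∀ V ∈ 𝒰 i, U ≠ V → ∀ u ∈ U, ∀ v ∈ V, D < dist u v)
/-- A hierarchical space structure on the quasigeodesic space `X`, with index set `S`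
and associated geodesic spaces `C U`.  The fields record the projections, relative
projections, nesting, orthogonality and the axioms of Behrstock–Hagen–Sisto;
`E` is a single constant exceeding all the constants of the structure. -/
structure HierarchicalSpace (X : Type*) [PseudoMetricSpace X]
    {S : Type*} (C : S → Type*) [∀ U : S, PseudoMetricSpace (C U)] where
  /-- The nesting relation `⊑`. -/
  nest : S → S → Prop
  /-- The orthogonality relation `⊥`. -/
  orth : S → S → Prop
  /-- The unique `⊑`-maximal element. -/
  maxS : S
  /-- The projections `π_U : X → 2^{C U}`. -/
  proj : ∀ U : S, X → Set (C U)
  /-- The relative projections `ρ^U_V ⊆ C V` (meaningful when `U ⊊ V` or `U ⋔ V`). -/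
  rho : ∀ _ V : S, Set (C V)
  /-- The downward relative projections `ρ^W_U : C W → 2^{C U}` (when `U ⊊ W`). -/
  rhom : ∀ W U : S, C W → Set (C U)
  /-- Quasigeodesicity constant of `X`. -/
  q : ℝ
  /-- The diameter bound for (relative) projections. -/
  ξ0 : ℝ
  /-- The coarse-Lipschitz constant for the projections. -/
  Kc : ℝ
  /-- The master constant `E`, exceeding all constants of the structure. -/
  E : ℝ
  /-- The partial-realization constant `α`. -/
  αc : ℝ
  /-- The large-links constant `λ`. -/
  lam : ℝ
  /-- The complexity: a bound for lengths of `⊑`-chains. -/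
  compl : ℕ
  one_le_E : 1 ≤ E
  ξ0_le_E : ξ0 ≤ E
  K_le_E : Kc ≤ E
  α_le_E : αc ≤ E
  lam_le_E : lam ≤ E
  /-- `X` is a `q`-quasigeodesic space. -/
  X_quasigeodesic : ∀ x y : X, ∃ γ : ℝ → X, γ 0 = x ∧ γ (dist x y) = y ∧
    ∀ s ∈ Set.Icc (0 : ℝ) (dist x y), ∀ t ∈ Set.Icc (0 : ℝ) (dist x y),
      dist (γ s) (γ t) ≤ q * |s - t| + q ∧ |s - t| ≤ q * dist (γ s) (γ t) + q
  /-- Each `C U` is a geodesic space. -/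
  C_geodesic : ∀ U : S, GeodesicSpace (C U)
  proj_nonempty : ∀ (U : S) (x : X), (proj U x).Nonempty
  proj_bounded : ∀ (U : S) (x : X), Metric.diam (proj U x) ≤ ξ0
  /-- The projections are uniformly coarsely Lipschitz. -/
  proj_coarseLipschitz : ∀ (U : S) (x y : X),
    Metric.diam (proj U x ∪ proj U y) ≤ Kc * dist x y + Kc
  nest_refl : ∀ U : S, nest U U
  nest_trans : ∀ U V W : S, nest U V → nest V W → nest U W
  nest_antisymm : ∀ U V : S, nest U V → nest V U → U = V
  nest_max : ∀ U : S, nest U maxS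
  rho_nonempty : ∀ U V : S,
    ((nest U V ∧ U ≠ V) ∨ (¬ nest U V ∧ ¬ nest V U ∧ ¬ orth U V)) → (rho U V).Nonempty
  rho_bounded : ∀ U V : S,
    ((nest U V ∧ U ≠ V) ∨ (¬ nest U V ∧ ¬ nest V U ∧ ¬ orth U V)) →
      Metric.diam (rho U V) ≤ ξ0
  orth_symm : ∀ U V : S, orth U V → orth V U
  orth_irrefl : ∀ U : S, ¬ orth U U
  orth_of_nest : ∀ U V W : S, nest V W → orth W U → orth V U
  /-- The orthogonality container axiom. -/
  orth_container : ∀ T U : S, nest U T → (∃ V, nest V T ∧ orth V U) →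
    ∃ W, nest W T ∧ W ≠ T ∧ ∀ V, nest V T → orth V U → nest V W
  not_nest_of_orth : ∀ U V : S, orth U V → ¬ nest U V
  /-- Consistency for transverse pairs. -/
  consistency_transverse : ∀ U V : S, (¬ nest U V ∧ ¬ nest V U ∧ ¬ orth U V) → ∀ x : X,
    min (sDist (proj V x) (rho U V)) (sDist (proj U x) (rho V U)) ≤ E
  /-- Consistency for nested pairs. -/
  consistency_nested : ∀ U V : S, nest U V → U ≠ V → ∀ x : X,
    min (sDist (proj V x) (rho U V))
      (Metric.diam (proj U x ∪ ⋃ p ∈ proj V x, rhom V U p)) ≤ E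
  /-- Consistency of relative projections. -/
  consistency_rho : ∀ U V W : S, nest U V → U ≠ V →
    ((nest V W ∧ V ≠ W) ∨ ((¬ nest V W ∧ ¬ nest W V ∧ ¬ orth V W) ∧ ¬ orth W U)) →
    sDist (rho U W) (rho V W) ≤ E
  /-- Finite complexity: pairwise `⊑`-comparable sets have cardinality at most `compl`. -/
  finite_complexity : ∀ T : Finset S,
    (∀ U ∈ T, ∀ V ∈ T, nest U V ∨ nest V U) → T.card ≤ compl
  /-- The large links axiom. -/
  large_links : ∀ (W : S) (x x' : X),
    ∃ Ts : Fin ⌊lam * sDist (proj W x) (proj W x') + lam⌋₊ → S,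
      (∀ i, nest (Ts i) W ∧ Ts i ≠ W) ∧
      (∀ V : S, nest V W → V ≠ W →
        (∃ i, nest V (Ts i)) ∨ sDist (proj V x) (proj V x') < E) ∧
      (∀ i, sDist (proj W x) (rho (Ts i) W) ≤ lam * sDist (proj W x) (proj W x') + lam)
  /-- Bounded geodesic image. -/
  bounded_geodesic_image : ∀ W U : S, nest U W → U ≠ W →
    ∀ (γ : ℝ → C W) (a b : C W), IsGeodesicFrom γ a b →
      Metric.diam (⋃ t ∈ Set.Icc (0 : ℝ) (dist a b), rhom W U (γ t)) ≤ E ∨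
      ∃ t ∈ Set.Icc (0 : ℝ) (dist a b), Metric.infDist (γ t) (rho U W) ≤ E
  /-- Partial realization. -/
  partial_realization : ∀ {ι : Type} (V : ι → S),
    (∀ i j, i ≠ j → orth (V i) (V j)) →
    ∀ p : ∀ i, C (V i), (∀ i, p i ∈ ⋃ x : X, proj (V i) x) →
    ∃ x : X, (∀ i, Metric.infDist (p i) (proj (V i) x) ≤ αc) ∧
      (∀ i (W : S), nest (V i) W → V i ≠ W → sDist (proj W x) (rho (V i) W) ≤ αc) ∧
      (∀ i (W : S), (¬ nest W (V i) ∧ ¬ nest (V i) W ∧ ¬ orth W (V i)) →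
        sDist (proj W x) (rho (V i) W) ≤ αc)
  /-- Uniqueness. -/
  uniqueness : ∀ κ : ℝ, ∃ θ : ℝ, ∀ x y : X, θ ≤ dist x y →
    ∃ V : S, κ ≤ sDist (proj V x) (proj V y)

namespace HierarchicalSpace

variable {X : Type*} [PseudoMetricSpace X] {S : Type*} {C : S → Type*}
  [∀ U : S, PseudoMetricSpace (C U)]

/-- Transversality: neither nested (either way) nor orthogonal. -/
def transv (H : HierarchicalSpace X C) (U V : S) : Prop :=
  ¬ H.nest U V ∧ ¬ H.nest V U ∧ ¬ H.orth U V

/-- Proper nesting `U ⊊ V`. -/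
def snest (H : HierarchicalSpace X C) (U V : S) : Prop := H.nest U V ∧ U ≠ V

/-- The distance `d_U(x,y)` between the projections of `x` and `y` to `C U`. -/
noncomputable def dp (H : HierarchicalSpace X C) (U : S) (x y : X) : ℝ :=
  sDist (H.proj U x) (H.proj U y)

/-- `U` is `⊑`-minimal. -/
def Minimal (H : HierarchicalSpace X C) (U : S) : Prop :=
  ∀ V : S, H.nest V U → V = U

/-- `(X, 𝔖)` is a `δ`-hierarchically hyperbolic space. -/
def IsHHS (H : HierarchicalSpace X C) (δ : ℝ) : Prop :=
  ∀ U : S, GromovHyperbolic (C U) δ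

/-- `(X, 𝔖)` is a `δ`-relatively hierarchically hyperbolic space:
`C U` is `δ`-hyperbolic for all non-`⊑`-minimal `U`. -/
def IsRelHHS (H : HierarchicalSpace X C) (δ : ℝ) : Prop :=
  ∀ U : S, ¬ H.Minimal U → GromovHyperbolic (C U) δ

/-- `U` is friendly to `V` if `U ⊑ V` or `U ⊥ V`. -/
def Friendly (H : HierarchicalSpace X C) (U V : S) : Prop :=
  H.nest U V ∨ H.orth U V

/-- There is a strict `⊑`-chain of length `ℓ` ending at `U`. -/
def ChainTo (H : HierarchicalSpace X C) (U : S) (ℓ : ℕ) : Prop :=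
  ∃ c : Fin ℓ → S, (∀ i j : Fin ℓ, i < j → H.nest (c i) (c j) ∧ c i ≠ c j) ∧
    ∃ h : 0 < ℓ, c ⟨ℓ - 1, Nat.sub_lt h one_pos⟩ = U

/-- `U` has level `ℓ`: the longest strict `⊑`-chain ending at `U` has length `ℓ`. -/
def HasLevel (H : HierarchicalSpace X C) (U : S) (ℓ : ℕ) : Prop :=
  H.ChainTo U ℓ ∧ ¬ H.ChainTo U (ℓ + 1)

end HierarchicalSpace
/-- The set of word lengths of `g` over the (symmetrized) alphabet `T`. -/
def wordLengths {G : Type*} [Group G] (T : Set G) (g : G) : Set ℕ :=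
  {n | ∃ w : Fin n → G, (∀ i, w i ∈ T ∨ (w i)⁻¹ ∈ T) ∧ g = (List.ofFn w).prod}

/-- The word metric on `G` with respect to the generating set `T`
(i.e. the graph metric of the Cayley graph `Cay(G,T)`). -/
noncomputable def wordDist {G : Type*} [Group G] (T : Set G) (g h : G) : ℝ :=
  sInf ((fun n : ℕ => (n : ℝ)) '' wordLengths T (g⁻¹ * h))

/-- Gromov's four-point hyperbolicity condition for a distance function. -/
def GromovHyperbolicFun {A : Type*} (d : A → A → ℝ) (δ : ℝ) : Prop :=
  ∀ x y z w : A, d x y + d z w ≤ max (d x z + d y w) (d x w + d y z) + 2 * δ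

/-- Lengths of paths in `Cay(G, T ∪ H)` from `a` to `b` which, between vertices
lying in `H`, are only allowed to use `T`-edges. -/
def relPathLengths {G : Type*} [Group G] (T : Set G) (Hs : Subgroup G) (a b : G) : Set ℕ :=
  {n | ∃ w : Fin (n + 1) → G, w 0 = a ∧ w (Fin.last n) = b ∧
    (∀ i : Fin n, (w i.castSucc)⁻¹ * w i.succ ∈ T ∨ ((w i.castSucc)⁻¹ * w i.succ)⁻¹ ∈ T ∨
      (w i.castSucc)⁻¹ * w i.succ ∈ Hs) ∧
    (∀ i : Fin n, w i.castSucc ∈ Hs → w i.succ ∈ Hs →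
      ((w i.castSucc)⁻¹ * w i.succ ∈ T ∨ ((w i.castSucc)⁻¹ * w i.succ)⁻¹ ∈ T))}

/-- The auxiliary relative metric `d̂` on `G` associated to `H ≤ G` and `T`. -/
noncomputable def relDist {G : Type*} [Group G] (T : Set G) (Hs : Subgroup G) (a b : G) : ℝ :=
  sInf ((fun n : ℕ => (n : ℝ)) '' relPathLengths T Hs a b)

/-- `H` is hyperbolically embedded in `(G, T)` in the sense of
Dahmani–Guirardel–Osin: `Cay(G, T ∪ H)` is hyperbolic and `H` is proper
for the relative metric `d̂`. -/
def HypEmbedded {G : Type*} [Group G] (Hs : Subgroup G) (T : Set G) : Prop :=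
  (∃ δ : ℝ, GromovHyperbolicFun (wordDist (T ∪ (Hs : Set G))) δ) ∧
  ∀ R : ℝ, {h : G | h ∈ Hs ∧ relDist T Hs 1 h ≤ R}.Finite

/-- A hierarchically hyperbolic group structure on `G`: a hierarchically
hyperbolic space structure on `G`, equipped with a word metric coming from a
finite generating set, on which `G` acts cofinitely by automorphisms. -/
structure HHGStructure (G : Type*) [Group G] [PseudoMetricSpace G]
    {S : Type*} (C : S → Type*) [∀ U : S, PseudoMetricSpace (C U)]
    extends HierarchicalSpace G C where
  δh : ℝ
  /-- All the spaces `C U` are uniformly hyperbolic. -/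
  hyperbolic : ∀ U : S, GromovHyperbolic (C U) δh
  /-- A finite generating set for `G`. -/
  T₀ : Finset G
  gen : Subgroup.closure (T₀ : Set G) = ⊤
  /-- The metric on `G` is the word metric of `T₀`. -/
  dist_word : ∀ g h : G, dist g h = wordDist (T₀ : Set G) g h
  /-- The action of `G` on the index set. -/
  act : G → S ≃ S
  /-- The action of `G` on the associated spaces. -/
  actC : ∀ (g : G) (U : S), C U → C (act g U)
  actC_isom : ∀ (g : G) (U : S) (a b : C U), dist (actC g U a) (actC g U b) = dist a b
  act_nest : ∀ (g : G) (U V : S), nest U V ↔ nest (act g U) (act g V)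
  act_orth : ∀ (g : G) (U V : S), orth U V ↔ orth (act g U) (act g V)
  /-- The action on the index set is cofinite. -/
  act_cofinite : ∃ F : Finset S, ∀ U : S, ∃ (g : G) (V : S), V ∈ F ∧ act g V = U
  /-- The projections are uniformly coarsely equivariant. -/
  equivar_proj : ∃ κ : ℝ, ∀ (g : G) (U : S) (x : G),
    Metric.hausdorffDist (proj (act g U) (g * x)) (actC g U '' proj U x) ≤ κ
  /-- The relative projections are uniformly coarsely equivariant. -/
  equivar_rho : ∃ κ : ℝ, ∀ (g : G) (U V : S),
    ((nest U V ∧ U ≠ V) ∨ (¬ nest U V ∧ ¬ nest V U ∧ ¬ orth U V)) →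
    Metric.hausdorffDist (rho (act g U) (act g V)) (actC g V '' rho U V) ≤ κ

/-- A relatively hierarchically hyperbolic group structure on `G`. -/
structure RHHGStructure (G : Type*) [Group G] [PseudoMetricSpace G]
    {S : Type*} (C : S → Type*) [∀ U : S, PseudoMetricSpace (C U)]
    extends HierarchicalSpace G C where
  δh : ℝ
  /-- The spaces `C U` are uniformly hyperbolic for non-`⊑`-minimal `U`. -/
  rel_hyperbolic : ∀ U : S, ¬ toHierarchicalSpace.Minimal U → GromovHyperbolic (C U) δh
  T₀ : Finset G
  gen : Subgroup.closure (T₀ : Set G) = ⊤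
  dist_word : ∀ g h : G, dist g h = wordDist (T₀ : Set G) g h
  act : G → S ≃ S
  actC : ∀ (g : G) (U : S), C U → C (act g U)
  actC_isom : ∀ (g : G) (U : S) (a b : C U), dist (actC g U a) (actC g U b) = dist a b
  act_nest : ∀ (g : G) (U V : S), nest U V ↔ nest (act g U) (act g V)
  act_orth : ∀ (g : G) (U V : S), orth U V ↔ orth (act g U) (act g V)
  act_cofinite : ∃ F : Finset S, ∀ U : S, ∃ (g : G) (V : S), V ∈ F ∧ act g V = U
  equivar_proj : ∃ κ : ℝ, ∀ (g : G) (U : S) (x : G),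
    Metric.hausdorffDist (proj (act g U) (g * x)) (actC g U '' proj U x) ≤ κ
  equivar_rho : ∃ κ : ℝ, ∀ (g : G) (U V : S),
    ((nest U V ∧ U ≠ V) ∨ (¬ nest U V ∧ ¬ nest V U ∧ ¬ orth U V)) →
    Metric.hausdorffDist (rho (act g U) (act g V)) (actC g V '' rho U V) ≤ κ

/-- `H` is hierarchically hyperbolically embedded in the HHG `(G, 𝔖)`,
with generating set `T`: the top-level space `C S` is `Cay(G, T)` (witnessed
by the isometric embedding `e` of the vertex set `G`, every point of `C S` being within `1`
of a vertex), `π_S` is the inclusion, `T ∩ H`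
generates `H`, and `H` is hyperbolically embedded in `(G, T)`. -/
structure HHEmbedded {G : Type*} [Group G] [PseudoMetricSpace G]
    {S : Type*} {C : S → Type*} [∀ U : S, PseudoMetricSpace (C U)]
    (𝒮 : HHGStructure G C) (Hs : Subgroup G) (T : Set G) where
  e : G → C 𝒮.maxS
  e_isom : ∀ g h : G, dist (e g) (e h) = wordDist T g h
  e_dense : ∀ p : C 𝒮.maxS, ∃ g : G, dist p (e g) ≤ 1
  proj_incl : ∀ x : G, 𝒮.proj 𝒮.maxS x = {e x}
  genG : Subgroup.closure T = ⊤
  genH : Subgroup.closure (T ∩ (Hs : Set G)) = Hs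
  hemb : HypEmbedded Hs T

/-- `N` is a normal subgroup of the subgroup `Hs`. -/
def IsNormalIn {G : Type*} [Group G] (N Hs : Subgroup G) : Prop :=
  N ≤ Hs ∧ ∀ h ∈ Hs, ∀ n ∈ N, h * n * h⁻¹ ∈ N

/-- A group is hyperbolic if some Cayley graph with respect to a finite
generating set is Gromov hyperbolic. -/
def IsHyperbolicGroup (K : Type*) [Group K] : Prop :=
  ∃ Tk : Finset K, Subgroup.closure (Tk : Set K) = ⊤ ∧
    ∃ δ : ℝ, GromovHyperbolicFun (wordDist (Tk : Set K)) δ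
/-- The Cayley graph of `G` with respect to the generating set `T`. -/
def cayley (G : Type*) [Group G] (T : Set G) : SimpleGraph G :=
  SimpleGraph.fromRel (fun g h => g⁻¹ * h ∈ T)

/-- The vertex set of the pyramid space `𝒫G_r`: the vertices `(g,n)` of the
combinatorial horoballs over the cosets of `Hs` (level `0` being the Cayley
graph of `G`), together with one apex `v_{gH}` for each coset. -/
abbrev PyrV (G : Type*) [Group G] (Hs : Subgroup G) : Type _ := (G × ℕ) ⊕ (G ⧸ Hs)

/-- The edge relation of the pyramid space: Cayley edges at level `0`;
vertical and horizontal horoball edges within each coset (a horizontal edge at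
level `n` whenever the distance in `Cay(gH, T ∩ H)` is positive and at most
`2^n`); and cone edges joining the apex of a coset to all its vertices at
levels `≥ r`. -/
def pyrRel {G : Type*} [Group G] (Hs : Subgroup G) (T : Set G) (r : ℕ) :
    PyrV G Hs → PyrV G Hs → Prop
  | Sum.inl (g, n), Sum.inl (g', n') =>
      (n = 0 ∧ n' = 0 ∧ (g⁻¹ * g' ∈ T ∨ (g⁻¹ * g')⁻¹ ∈ T)) ∨
      (g = g' ∧ n' = n + 1) ∨
      (n = n' ∧ g⁻¹ * g' ∈ Hs ∧ g ≠ g' ∧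
        wordDist (T ∩ (Hs : Set G)) g g' ≤ (2 : ℝ) ^ n)
  | Sum.inl (g, n), Sum.inr c => (g : G ⧸ Hs) = c ∧ r ≤ n
  | Sum.inr _, _ => False

/-- The pyramid space `𝒫G_r`, as a graph. -/
def pyramid {G : Type*} [Group G] (Hs : Subgroup G) (T : Set G) (r : ℕ) :
    SimpleGraph (PyrV G Hs) :=
  SimpleGraph.fromRel (pyrRel Hs T r)

/-- The hyperbolic cone `𝔠(gH) ⊆ 𝒫G_r` over the coset `c = gH`: all the
horoball vertices over `c` together with the apex `v_{gH}`. -/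
def coneSet {G : Type*} [Group G] (Hs : Subgroup G) (c : G ⧸ Hs) : Set (PyrV G Hs) :=
  {v | match v with
    | Sum.inl (g, _) => (g : G ⧸ Hs) = c
    | Sum.inr c' => c' = c}

/-- A subset `A` of a graph is `Q`-quasiconvex if every geodesic (i.e. every
walk of minimal length) with endpoints in `A` stays within distance `Q` of `A`. -/
def GraphQuasiconvex {V : Type*} (Γ : SimpleGraph V) (A : Set V) (Q : ℝ) : Prop :=
  ∀ u ∈ A, ∀ v ∈ A, ∀ p : Γ.Walk u v, p.length = Γ.dist u v →
    ∀ w ∈ p.support, ∃ a ∈ A, (Γ.dist w a : ℝ) ≤ Q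

/-- `w` is the first element of the list `l` belonging to `A`. -/
def IsFirstIn {V : Type*} (l : List V) (A : Set V) (w : V) : Prop :=
  ∃ i : Fin l.length, l.get i = w ∧ w ∈ A ∧ ∀ j : Fin l.length, j < i → l.get j ∉ A

/-- The ordered list of level-`0` group elements visited by a walk in the
pyramid space. -/
def groundTrace {G : Type*} [Group G] {Hs : Subgroup G} {T : Set G} {r : ℕ}
    {u v : PyrV G Hs} (p : (pyramid Hs T r).Walk u v) : List G :=
  p.support.filterMap (fun w => match w with
    | Sum.inl (g, 0) => some g
    | _ => none)

/-- `γ : {0,…,m} → G` is a push-off of the pyramid geodesic `p`: it visits the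
level-`0` vertices of `p` in order, and between consecutive ones it travels
along geodesics of the Cayley graph `Cay(G,T)` (in particular, subpaths of `p`
in the Cayley graph are kept, and maximal subpaths of `p` in hyperbolic cones
are replaced by Cayley geodesics — "replacement paths"). -/
def IsPushOff {G : Type*} [Group G] {Hs : Subgroup G} (T : Set G) {r : ℕ}
    {u v : PyrV G Hs} (m : ℕ) (γ : ℕ → G) (p : (pyramid Hs T r).Walk u v) : Prop :=
  ∃ (n : ℕ) (t : Fin (n + 1) → ℕ),
    (∀ i j : Fin (n + 1), i ≤ j → t i ≤ t j) ∧ t 0 = 0 ∧ t (Fin.last n) = m ∧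
    groundTrace p = List.ofFn (fun i : Fin (n + 1) => γ (t i)) ∧
    ∀ i : Fin n, ∀ j k : ℕ, t i.castSucc ≤ j → j ≤ k → k ≤ t i.succ →
      (cayley G T).dist (γ j) (γ k) = k - j
section ConeAux

open SimpleGraph

variable {G : Type*} [Group G] {Hs : Subgroup G} {T : Set G} {r : ℕ}

lemma mem_coneSet_inl {g : G} {k : ℕ} {c : G ⧸ Hs} :
    (Sum.inl (g, k) : PyrV G Hs) ∈ coneSet Hs c ↔ (g : G ⧸ Hs) = c := Iff.rfl

/-- The "height towards the cone over `c`" potential function. -/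
noncomputable def coneHt (Hs : Subgroup G) (c : G ⧸ Hs) (r : ℕ) : PyrV G Hs → ℕ
  | Sum.inl (g, k) => if (g : G ⧸ Hs) = c then min (k + 1) (r + 1) else 0
  | Sum.inr c' => if c' = c then r + 1 else 0

lemma coneHt_rel {c : G ⧸ Hs} : ∀ {v v' : PyrV G Hs}, pyrRel Hs T r v v' →
    coneHt Hs c r v' ≤ coneHt Hs c r v + 1 ∧ coneHt Hs c r v ≤ coneHt Hs c r v' + 1 := by
  rintro (⟨g, n⟩ | c₁) (⟨g', n'⟩ | c₂) h
  · rcases h with ⟨h0, h0', -⟩ | ⟨rfl, rfl⟩ | ⟨rfl, hH, -, -⟩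
    · subst h0; subst h0'
      simp only [coneHt]; split_ifs <;> omega
    · simp only [coneHt]; split_ifs <;> omega
    · have hq : (g : G ⧸ Hs) = (g' : G ⧸ Hs) := QuotientGroup.eq.mpr hH
      simp only [coneHt, hq]; split_ifs <;> omega
  · obtain ⟨rfl, hrn⟩ := h
    simp only [coneHt]; split_ifs <;> omega
  · exact h.elim
  · exact h.elim

lemma coneHt_adj {c : G ⧸ Hs} {v v' : PyrV G Hs} (h : (pyramid Hs T r).Adj v v') :
    coneHt Hs c r v' ≤ coneHt Hs c r v + 1 := by
  obtain ⟨-, h | h⟩ := h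
  · exact (coneHt_rel h).1
  · exact (coneHt_rel h).2

lemma coneHt_walk {c : G ⧸ Hs} {u v : PyrV G Hs} (W : (pyramid Hs T r).Walk u v) :
    coneHt Hs c r v ≤ coneHt Hs c r u + W.length := by
  induction W with
  | nil => simp
  | cons h q ih =>
    have h1 := coneHt_adj (c := c) h
    rw [SimpleGraph.Walk.length_cons]
    omega

lemma coneHt_eq_zero {c : G ⧸ Hs} {w : PyrV G Hs} (hw : w ∉ coneSet Hs c) :
    coneHt Hs c r w = 0 := by
  rcases w with ⟨g, k⟩ | c'
  · have : ¬ ((g : G ⧸ Hs) = c) := fun h => hw (mem_coneSet_inl.mpr h)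
    simp only [coneHt, if_neg this]
  · have : ¬ (c' = c) := fun h => hw h
    simp only [coneHt, if_neg this]

/-- Any vertex not in the cone over `c` is at distance at least `r+1`
from the apex of that cone. -/
lemma dist_apex_lower {c : G ⧸ Hs} {w : PyrV G Hs} (hw : w ∉ coneSet Hs c)
    (hre : (pyramid Hs T r).Reachable w (Sum.inr c)) :
    r + 1 ≤ (pyramid Hs T r).dist w (Sum.inr c) := by
  obtain ⟨W, hW⟩ := hre.exists_walk_length_eq_dist
  have h := coneHt_walk (c := c) W
  have h0 : coneHt Hs c r w = 0 := coneHt_eq_zero hw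
  have h1 : coneHt Hs c r (Sum.inr c : PyrV G Hs) = r + 1 := by
    simp [coneHt]
  omega

/-- Vertical walks in a horoball. -/
lemma exists_walk_up (g : G) (k : ℕ) :
    ∀ j : ℕ, ∃ W : (pyramid Hs T r).Walk (Sum.inl (g, k)) (Sum.inl (g, k + j)),
      W.length = j := by
  intro j
  induction j with
  | zero => exact ⟨SimpleGraph.Walk.nil, rfl⟩
  | succ j ih =>
    obtain ⟨W, hW⟩ := ih
    have hadj : (pyramid Hs T r).Adj (Sum.inl (g, k + j)) (Sum.inl (g, k + (j+1))) := by
      refine ⟨?_, Or.inl (Or.inr (Or.inl ⟨rfl, rfl⟩))⟩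
      intro hh
      simp only [Sum.inl.injEq, Prod.mk.injEq] at hh
      omega
    exact ⟨W.concat hadj, by rw [SimpleGraph.Walk.length_concat, hW]⟩

/-- Every point of the cone over `c` is within distance `r+1` of the apex. -/
lemma cone_dist_apex {c : G ⧸ Hs} {a : PyrV G Hs} (ha : a ∈ coneSet Hs c) :
    (pyramid Hs T r).dist a (Sum.inr c) ≤ r + 1 := by
  rcases a with ⟨g, k⟩ | c'
  · have hg : (g : G ⧸ Hs) = c := ha
    obtain ⟨W, hW⟩ := exists_walk_up (Hs := Hs) (T := T) (r := r) g k (r - k)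
    have hadj : (pyramid Hs T r).Adj (Sum.inl (g, k + (r - k))) (Sum.inr c) := by
      refine ⟨by simp, Or.inl ⟨hg, by omega⟩⟩
    have hd := SimpleGraph.dist_le (W.concat hadj)
    rw [SimpleGraph.Walk.length_concat, hW] at hd
    omega
  · have : c' = c := ha
    subst this
    rw [SimpleGraph.dist_self]
    omega

/-- The pyramid space is connected. -/
lemma pyramid_connected (hgen : Subgroup.closure T = ⊤) :
    (pyramid Hs T r).Connected := by
  have reach_zero : ∀ v : PyrV G Hs, ∃ g : G,
      (pyramid Hs T r).Reachable v (Sum.inl (g, 0)) := by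
    rintro (⟨g, n⟩ | c)
    · obtain ⟨W, -⟩ := exists_walk_up (Hs := Hs) (T := T) (r := r) g 0 n
      exact ⟨g, ⟨(W.copy rfl (by rw [Nat.zero_add])).reverse⟩⟩
    · obtain ⟨g, rfl⟩ := QuotientGroup.mk_surjective c
      have hadj : (pyramid Hs T r).Adj (Sum.inr (g : G ⧸ Hs)) (Sum.inl (g, r)) := by
        refine ⟨by simp, Or.inr ⟨rfl, le_refl r⟩⟩
      obtain ⟨W, -⟩ := exists_walk_up (Hs := Hs) (T := T) (r := r) g 0 r
      refine ⟨g, hadj.reachable.trans ⟨(W.copy rfl (by rw [Nat.zero_add])).reverse⟩⟩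
  have key : ∀ k : G, k ∈ Subgroup.closure T → ∀ g : G,
      (pyramid Hs T r).Reachable (Sum.inl (g, 0)) (Sum.inl (g * k, 0)) := by
    intro k hk
    induction hk using Subgroup.closure_induction with
    | mem x hx =>
      intro g
      by_cases hgx : (Sum.inl (g, 0) : PyrV G Hs) = Sum.inl (g * x, 0)
      · rw [hgx]
      · refine SimpleGraph.Adj.reachable ⟨hgx, Or.inl (Or.inl ⟨rfl, rfl, Or.inl ?_⟩)⟩
        rwa [inv_mul_cancel_left]
    | one => intro g; rw [mul_one]
    | mul x y hx hy ihx ihy =>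
      intro g
      exact (ihx g).trans ((mul_assoc g x y) ▸ ihy (g * x))
    | inv x hx ihx =>
      intro g
      have h := ihx (g * x⁻¹)
      rw [inv_mul_cancel_right] at h
      exact h.symm
  have level0 : ∀ g h : G,
      (pyramid Hs T r).Reachable (Sum.inl (g, 0)) (Sum.inl (h, 0)) := by
    intro g h
    have hmem : g⁻¹ * h ∈ Subgroup.closure T := by rw [hgen]; trivial
    have := key _ hmem g
    rwa [mul_inv_cancel_left] at this
  have hpre : (pyramid Hs T r).Preconnected := by
    intro u v
    obtain ⟨gu, hu⟩ := reach_zero u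
    obtain ⟨gv, hv⟩ := reach_zero v
    exact hu.trans ((level0 gu gv).trans hv.symm)
  haveI : Nonempty (PyrV G Hs) := ⟨Sum.inl (1, 0)⟩
  exact ⟨hpre⟩

/-- Splitting a walk at time `t`. -/
lemma exists_walk_split {V : Type*} {Γ : SimpleGraph V} :
    ∀ {u v : V} (p : Γ.Walk u v) (t : ℕ), t ≤ p.length →
    ∃ (q : Γ.Walk u (p.getVert t)) (q' : Γ.Walk (p.getVert t) v),
      q.length = t ∧ q'.length = p.length - t := by
  intro u v p
  induction p with
  | nil =>
    intro t ht
    have : t = 0 := by simpa using ht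
    subst this
    exact ⟨SimpleGraph.Walk.nil, SimpleGraph.Walk.nil, rfl, rfl⟩
  | cons h q ih =>
    intro t ht
    cases t with
    | zero => exact ⟨SimpleGraph.Walk.nil, SimpleGraph.Walk.cons h q, rfl, rfl⟩
    | succ s =>
      have hs : s ≤ q.length := by
        rw [SimpleGraph.Walk.length_cons] at ht; omega
      obtain ⟨q1, q2, h1, h2⟩ := ih s hs
      refine ⟨SimpleGraph.Walk.cons h q1, q2, ?_, ?_⟩
      · show q1.length + 1 = s + 1; rw [h1]
      · show q2.length = q.length + 1 - (s + 1); rw [h2]; omega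

lemma getVert_mem_support' {V : Type*} {Γ : SimpleGraph V} :
    ∀ {u v : V} (p : Γ.Walk u v) (t : ℕ), p.getVert t ∈ p.support := by
  intro u v p
  induction p with
  | nil => intro t; simp [SimpleGraph.Walk.getVert]
  | cons h q ih =>
    intro t
    cases t with
    | zero => exact SimpleGraph.Walk.start_mem_support _
    | succ s =>
      rw [SimpleGraph.Walk.support_cons]
      exact List.mem_cons_of_mem _ (ih s)

end ConeAux

/-- **Lemma (geodesics between points near a cone enter the cone).**
There exists `C = C(δ,Q)` such that for all sufficiently large `r` the
following holds.  Let `(G,𝔖)` be an HHG with `H` hierarchically hyperbolically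
embedded, suppose `𝒫G_r` is `δ`-hyperbolic and each cone `𝔠(gH)` is
`Q`-quasiconvex in `𝒫G_r`.  If `x, y ∈ 𝒫G_r` satisfy
`d_△(x,𝔠(gH)), d_△(y,𝔠(gH)) ≤ 2δ + Q` and `d_△(x,y) ≥ C`, then every geodesic
from `x` to `y` meets `𝔠(gH)` in an interior point. -/
theorem geodesic_enters_cone :
    ∀ δ Q : ℝ, ∃ Cc : ℝ,
      ∀ (G : Type) [Group G] [PseudoMetricSpace G] (S : Type) (C : S → Type)
        [∀ U : S, PseudoMetricSpace (C U)] (𝒮 : HHGStructure G C)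
        (Hs : Subgroup G) (T : Set G), HHEmbedded 𝒮 Hs T →
      ∃ r₀ : ℕ, ∀ r : ℕ, r₀ ≤ r →
        GromovHyperbolicFun
          (fun u v : PyrV G Hs => ((pyramid Hs T r).dist u v : ℝ)) δ →
        (∀ c : G ⧸ Hs, GraphQuasiconvex (pyramid Hs T r) (coneSet Hs c) Q) →
        ∀ (x y : PyrV G Hs) (c : G ⧸ Hs),
          (∃ a ∈ coneSet Hs c, ((pyramid Hs T r).dist x a : ℝ) ≤ 2 * δ + Q) →
          (∃ a ∈ coneSet Hs c, ((pyramid Hs T r).dist y a : ℝ) ≤ 2 * δ + Q) →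
          Cc ≤ ((pyramid Hs T r).dist x y : ℝ) →
          ∀ p : (pyramid Hs T r).Walk x y, p.length = (pyramid Hs T r).dist x y →
            ∃ w ∈ p.support, w ∈ coneSet Hs c ∧ w ≠ x ∧ w ≠ y := by
  intro δ Q
  refine ⟨8 * δ + 2 * Q + 2, ?_⟩
  intro G _ _ S C _ 𝒮 Hs T hhe
  refine ⟨0, ?_⟩
  intro r _hr hhyp _hqc x y c hx hy hC p hp
  obtain ⟨a, ha, hxa⟩ := hx
  obtain ⟨b, hb, hyb⟩ := hy
  have hconn : (pyramid Hs T r).Connected := pyramid_connected hhe.genG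
  -- δ ≥ 0
  have hδ : 0 ≤ δ := by
    have h := hhyp (Sum.inl (1, 0)) (Sum.inl (1, 0)) (Sum.inl (1, 0)) (Sum.inl (1, 0))
    simp only [SimpleGraph.dist_self, Nat.cast_zero, add_zero, max_self] at h
    linarith
  have hKQ : (0 : ℝ) ≤ 2 * δ + Q := le_trans (Nat.cast_nonneg _) hxa
  set L := p.length with hLdef
  have hLd : (pyramid Hs T r).dist x y = L := hp.symm
  have hLR : (8 : ℝ) * δ + 2 * Q + 2 ≤ (L : ℝ) := by rw [hLd] at hC; exact hC
  have hL2 : 2 ≤ L := by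
    have h2L : (2 : ℝ) ≤ (L : ℝ) := le_trans (by linarith) hLR
    exact_mod_cast h2L
  set t := L / 2 with htdef
  have ht1 : 1 ≤ t := by omega
  have htL : t ≤ L := by omega
  have h2t : t ≤ L - t := by omega
  set w := p.getVert t with hwdef
  obtain ⟨q1, q2, hq1, hq2⟩ := exists_walk_split p t htL
  have hdxw : (pyramid Hs T r).dist x w ≤ t :=
    le_trans (SimpleGraph.dist_le q1) (le_of_eq hq1)
  have hdwy : (pyramid Hs T r).dist w y ≤ L - t :=
    le_trans (SimpleGraph.dist_le q2) (le_of_eq hq2)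
  have htri : (pyramid Hs T r).dist x y ≤
      (pyramid Hs T r).dist x w + (pyramid Hs T r).dist w y := hconn.dist_triangle
  have hxw : (pyramid Hs T r).dist x w = t := by omega
  have hwy : (pyramid Hs T r).dist w y = L - t := by omega
  by_cases hw : w ∈ coneSet Hs c
  · refine ⟨w, getVert_mem_support' p t, hw, ?_, ?_⟩
    · intro hwe
      rw [hwe, SimpleGraph.dist_self] at hxw
      omega
    · intro hwe
      rw [hwe, SimpleGraph.dist_self] at hwy
      omega
  · exfalso
    set u : PyrV G Hs := Sum.inr c with hudef
    have hlow : r + 1 ≤ (pyramid Hs T r).dist w u :=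
      dist_apex_lower hw (hconn.preconnected w u)
    have hua : (pyramid Hs T r).dist a u ≤ r + 1 := cone_dist_apex ha
    have hub : (pyramid Hs T r).dist b u ≤ r + 1 := cone_dist_apex hb
    -- distance from the apex to x and to y
    have hux : ((pyramid Hs T r).dist u x : ℝ) ≤ (r + 1 : ℝ) + (2 * δ + Q) := by
      have h1 : (pyramid Hs T r).dist u x ≤
          (pyramid Hs T r).dist u a + (pyramid Hs T r).dist a x := hconn.dist_triangle
      have h2 : (pyramid Hs T r).dist u a = (pyramid Hs T r).dist a u :=
        SimpleGraph.dist_comm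
      have h3 : (pyramid Hs T r).dist a x = (pyramid Hs T r).dist x a :=
        SimpleGraph.dist_comm
      rw [h2, h3] at h1
      calc ((pyramid Hs T r).dist u x : ℝ)
          ≤ ((pyramid Hs T r).dist a u : ℝ) + ((pyramid Hs T r).dist x a : ℝ) := by
            exact_mod_cast h1
        _ ≤ (r + 1 : ℝ) + (2 * δ + Q) := by
            have : ((pyramid Hs T r).dist a u : ℝ) ≤ (r + 1 : ℝ) := by exact_mod_cast hua
            linarith
    have huy : ((pyramid Hs T r).dist u y : ℝ) ≤ (r + 1 : ℝ) + (2 * δ + Q) := by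
      have h1 : (pyramid Hs T r).dist u y ≤
          (pyramid Hs T r).dist u b + (pyramid Hs T r).dist b y := hconn.dist_triangle
      have h2 : (pyramid Hs T r).dist u b = (pyramid Hs T r).dist b u :=
        SimpleGraph.dist_comm
      have h3 : (pyramid Hs T r).dist b y = (pyramid Hs T r).dist y b :=
        SimpleGraph.dist_comm
      rw [h2, h3] at h1
      calc ((pyramid Hs T r).dist u y : ℝ)
          ≤ ((pyramid Hs T r).dist b u : ℝ) + ((pyramid Hs T r).dist y b : ℝ) := by
            exact_mod_cast h1
        _ ≤ (r + 1 : ℝ) + (2 * δ + Q) := by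
            have : ((pyramid Hs T r).dist b u : ℝ) ≤ (r + 1 : ℝ) := by exact_mod_cast hub
            linarith
    -- the four-point condition at (w, u, x, y)
    have h4 := hhyp w u x y
    simp only at h4
    have hwx' : ((pyramid Hs T r).dist w x : ℝ) = (t : ℝ) := by
      rw [SimpleGraph.dist_comm, hxw]
    have hwy' : ((pyramid Hs T r).dist w y : ℝ) = ((L - t : ℕ) : ℝ) := by
      rw [hwy]
    have hxy' : ((pyramid Hs T r).dist x y : ℝ) = (L : ℝ) := by rw [hLd]
    have hcast : ((L - t : ℕ) : ℝ) = (L : ℝ) - (t : ℝ) := by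
      rw [Nat.cast_sub htL]
    have h2t' : (t : ℝ) ≤ (L : ℝ) - (t : ℝ) := by
      rw [← hcast]; exact_mod_cast h2t
    have hA : ((pyramid Hs T r).dist w x : ℝ) + ((pyramid Hs T r).dist u y : ℝ) ≤
        ((L : ℝ) - t) + ((r + 1 : ℝ) + (2 * δ + Q)) := by
      rw [hwx']; linarith
    have hB : ((pyramid Hs T r).dist w y : ℝ) + ((pyramid Hs T r).dist u x : ℝ) ≤
        ((L : ℝ) - t) + ((r + 1 : ℝ) + (2 * δ + Q)) := by
      rw [hwy', hcast]; linarith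
    have hmax := max_le hA hB
    have hlow' : (r : ℝ) + 1 ≤ ((pyramid Hs T r).dist w u : ℝ) := by exact_mod_cast hlow
    have hfinal : (r : ℝ) + 1 + (L : ℝ) ≤
        ((L : ℝ) - t) + ((r + 1 : ℝ) + (2 * δ + Q)) + 2 * δ := by
      calc (r : ℝ) + 1 + (L : ℝ)
          ≤ ((pyramid Hs T r).dist w u : ℝ) + ((pyramid Hs T r).dist x y : ℝ) := by
            rw [hxy']; linarith
        _ ≤ max (((pyramid Hs T r).dist w x : ℝ) + ((pyramid Hs T r).dist u y : ℝ))
              (((pyramid Hs T r).dist w y : ℝ) + ((pyramid Hs T r).dist u x : ℝ)) + 2 * δ :=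
            h4
        _ ≤ ((L : ℝ) - t) + ((r + 1 : ℝ) + (2 * δ + Q)) + 2 * δ := by linarith
    -- conclude : t ≤ 4δ + Q, while 2t + 1 ≥ L ≥ 8δ + 2Q + 2
    have h2t1 : (L : ℝ) ≤ 2 * (t : ℝ) + 1 := by
      have : L ≤ 2 * t + 1 := by omega
      exact_mod_cast this
    linarith
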